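/- Let T ∈ ℝ^{n₁×…×n_d} be an order-d tensor with T = (U₁#,…,U_d#).G# where each U_i# ∈ ℝ_+^{n_i×r_i} is separable with entries in [0,1] and column sums appropriately normalized, and suppose for every k ∈ [d] the mode-k unfolding T₍ₖ₎ has rank r_k. Then for any other decomposition T = (U₁*,…,U_d*).G* with all U_i* separable, there exist permutation matrices Π_i such that U_i* = U_i# Π_i for all i and G* = (Π₁^T,…,Π_d^T).G#. -/

import Mathlib

/-!
Fix a mode `k`. The unfolding factors as `T₍ₖ₎ = M Uₖᵀ` with `M = (⊗_{j≠k} U_j) G₍ₖ₎`, and since it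
has rank `rₖ`, both factors have full column rank. Comparing two such factorizations, `Uₖ* = Uₖ B`
and `Uₖ = Uₖ* B'` with `B B' = 1`. Reading these identities on the diagonal rows supplied by
separability shows that `B` and `B'` are entrywise nonnegative, and the normalized column sums make
`B` column-stochastic. A nonnegative matrix with a nonnegative inverse has a single nonzero entry in
each row, so `B` is a permutation matrix. Finally every `U_k` has a left inverse, so the Tucker
action of `(U_k)` is injective, which determines the core.
-/

open Matrix

/-- The Tucker multilinear action of the matrices `U k` on an order-`d`
core tensor `G`. -/
noncomputable def tucker {d : ℕ} {m r : Fin d → ℕ}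
    (U : ∀ k, Matrix (Fin (m k)) (Fin (r k)) ℝ)
    (G : (∀ k, Fin (r k)) → ℝ) : (∀ k, Fin (m k)) → ℝ :=
  fun j => ∑ i : ∀ k, Fin (r k), (∏ k, U k (j k) (i k)) * G i

/-- The mode-`k` unfolding of an order-`d` tensor, a matrix whose rows are
indexed by the remaining modes and whose columns by mode `k`. -/
def unfoldMode {d : ℕ} {m : Fin d → ℕ}
    (T : (∀ k, Fin (m k)) → ℝ) (k : Fin d) :
    Matrix (∀ j : {j : Fin d // j ≠ k}, Fin (m j.1)) (Fin (m k)) ℝ :=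
  fun rest i =>
    T (fun j => if h : j = k then Fin.cast (congrArg m h).symm i else rest ⟨j, h⟩)

/-- `H` is separable: some square row-submatrix of `H` is a diagonal matrix
with positive diagonal entries. -/
def Separable {n r : Type*} [Fintype n] [Fintype r]
    (H : Matrix n r ℝ) : Prop :=
  ∃ K : r → n, Function.Injective K ∧
    (∀ i j : r, i ≠ j → H (K i) j = 0) ∧ (∀ i : r, 0 < H (K i) i)

namespace Matrix

section Rank

variable {K : Type*} [Field K] {l m n o : Type*} [Fintype m] [Fintype n] [Fintype o]

theorem rank_eq_card_width_of_rank_mul {A : Matrix l n K} {B : Matrix n o K}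
    (h : (A * B).rank = Fintype.card n) : A.rank = Fintype.card n :=
  le_antisymm (rank_le_card_width A) (h ▸ rank_mul_le_left A B)

theorem rank_eq_card_height_of_rank_mul {A : Matrix l n K} {B : Matrix n o K}
    (h : (A * B).rank = Fintype.card n) : B.rank = Fintype.card n :=
  le_antisymm (rank_le_card_height B) (h ▸ rank_mul_le_right A B)

variable [DecidableEq n]

theorem exists_mul_eq_one_of_rank_eq_card {A : Matrix m n K} (h : A.rank = Fintype.card n) :
    ∃ L : Matrix n m K, L * A = 1 := by
  rw [← vecMul_surjective_iff_exists_left_inverse]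
  have hrange : LinearMap.range Aᵀ.mulVecLin = ⊤ :=
    Submodule.eq_top_of_finrank_eq <| by
      rw [Module.finrank_fintype_fun_eq_card, ← h, ← rank_transpose A]; rfl
  intro y
  obtain ⟨x, hx⟩ : y ∈ LinearMap.range Aᵀ.mulVecLin := hrange ▸ Submodule.mem_top
  exact ⟨x, (mulVec_transpose A x).symm.trans hx⟩

theorem exists_eq_mul_of_mul_transpose_eq {M N : Matrix m n K} {U V : Matrix l n K}
    (h : M * Uᵀ = N * Vᵀ) (hN : N.rank = Fintype.card n) : ∃ B : Matrix n n K, V = U * B := by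
  obtain ⟨L, hL⟩ := exists_mul_eq_one_of_rank_eq_card hN
  refine ⟨(L * M)ᵀ, ?_⟩
  calc V = V * (L * N)ᵀ := by rw [hL, transpose_one, Matrix.mul_one]
    _ = (N * Vᵀ)ᵀ * Lᵀ := by
      rw [transpose_mul, transpose_mul, transpose_transpose, Matrix.mul_assoc]
    _ = U * (L * M)ᵀ := by
      rw [← h, transpose_mul, transpose_transpose, transpose_mul, Matrix.mul_assoc]

end Rank

theorem sum_mul_apply_of_sum_eq_one {R : Type*} [NonAssocSemiring R] {l m o : Type*} [Fintype l]
    [Fintype m] {A : Matrix l m R} {B : Matrix m o R} (hA : ∀ j, ∑ i, A i j = 1) (k : o) :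
    ∑ i, (A * B) i k = ∑ j, B j k := by
  simp only [mul_apply]
  rw [Finset.sum_comm]
  simp only [← Finset.sum_mul, hA, one_mul]

theorem permMatrix_transpose_mul {R : Type*} [NonAssocSemiring R] {r : Type*} [Fintype r]
    [DecidableEq r] (σ : Equiv.Perm r) : (σ.permMatrix R)ᵀ * σ.permMatrix R = 1 := by
  rw [transpose_permMatrix, ← permMatrix_mul, mul_inv_cancel, permMatrix_one]

section Nonneg

variable {R : Type*} [Field R] [LinearOrder R] [IsStrictOrderedRing R] {l o r : Type*} [Fintype r]

theorem mul_apply_eq_zero_of_nonneg {A : Matrix l r R} {B : Matrix r o R}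
    (hA : ∀ i j, 0 ≤ A i j) (hB : ∀ i j, 0 ≤ B i j) {i : l} {k : o} (h : (A * B) i k = 0)
    (j : r) : A i j * B j k = 0 :=
  (Finset.sum_eq_zero_iff_of_nonneg fun j _ => mul_nonneg (hA i j) (hB j k)).mp h j
    (Finset.mem_univ j)

variable [DecidableEq r]

theorem exists_perm_of_nonneg_of_mul_eq_one {B C : Matrix r r R} (hB : ∀ i j, 0 ≤ B i j)
    (hC : ∀ i j, 0 ≤ C i j) (hBC : B * C = 1) :
    ∃ σ : Equiv.Perm r, ∀ i j, j ≠ σ i → B i j = 0 := by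
  have hCB : C * B = 1 := mul_eq_one_comm.mp hBC
  have hdiag : ∀ i, ∃ a, 0 < B i a ∧ 0 < C a i := by
    intro i
    have hii : ∑ a, B i a * C a i ≠ 0 := by
      rw [← mul_apply, hBC, one_apply_eq]; exact one_ne_zero
    obtain ⟨a, -, ha⟩ := Finset.exists_ne_zero_of_sum_ne_zero hii
    exact ⟨a, (hB i a).lt_of_ne (left_ne_zero_of_mul ha).symm,
      (hC a i).lt_of_ne (right_ne_zero_of_mul ha).symm⟩
  choose f hfB hfC using hdiag
  have hCf : ∀ i j, j ≠ i → C (f i) j = 0 := fun i j hji =>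
    (mul_eq_zero.mp (mul_apply_eq_zero_of_nonneg hB hC
      (by rw [hBC, one_apply_ne hji.symm]) (f i))).resolve_left (hfB i).ne'
  have hBf : ∀ i j, j ≠ f i → B i j = 0 := fun i j hj =>
    (mul_eq_zero.mp (mul_apply_eq_zero_of_nonneg hC hB
      (by rw [hCB, one_apply_ne hj.symm]) i)).resolve_left (hfC i).ne'
  have hf : Function.Injective f := fun i i' hii' => by
    by_contra hne
    exact (hfC i').ne' (hii' ▸ hCf i i' (Ne.symm hne))
  exact ⟨Equiv.ofBijective f hf.bijective_of_finite, hBf⟩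

theorem exists_perm_eq_permMatrix_of_mem_colStochastic {B C : Matrix r r R}
    (hB : B ∈ colStochastic R r) (hC : ∀ i j, 0 ≤ C i j) (hBC : B * C = 1) :
    ∃ σ : Equiv.Perm r, B = σ.permMatrix R := by
  obtain ⟨σ, hσ⟩ := exists_perm_of_nonneg_of_mul_eq_one
    (fun i j => nonneg_of_mem_colStochastic hB) hC hBC
  have hone : ∀ i, B i (σ i) = 1 := fun i => by
    rw [← sum_col_of_mem_colStochastic hB (σ i), Fintype.sum_eq_single i]
    exact fun i' hi' => hσ i' (σ i) (σ.injective.ne hi').symm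
  refine ⟨σ, ext fun i j => ?_⟩
  simp only [Equiv.Perm.permMatrix, PEquiv.toMatrix_apply, Equiv.toPEquiv_apply, Option.mem_def,
    Option.some.injEq]
  by_cases h : σ i = j
  · subst h; simp [hone]
  · simp [h, hσ i j (Ne.symm h)]

end Nonneg

end Matrix

namespace Separable

variable {m n r : Type*} [Fintype n] [Fintype r]

theorem nonneg_of_nonneg_mul {s : Type*} {H : Matrix n r ℝ} (hH : Separable H)
    {B : Matrix r s ℝ} (h : ∀ i j, 0 ≤ (H * B) i j) (a : r) (j : s) : 0 ≤ B a j := by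
  obtain ⟨K, -, hK0, hKpos⟩ := hH
  have hrow : (H * B) (K a) j = H (K a) a * B a j :=
    Fintype.sum_eq_single a fun c hc => mul_eq_zero_of_left (hK0 a c hc.symm) _
  exact nonneg_of_mul_nonneg_right (hrow ▸ h (K a) j) (hKpos a)

/-- Identifiability of separable NMF. -/
theorem exists_perm_of_mul_transpose_eq [Fintype m] [DecidableEq r] {U V : Matrix n r ℝ}
    {M N : Matrix m r ℝ} (hU : Separable U) (hV : Separable V) (hU0 : ∀ i j, 0 ≤ U i j)
    (hV0 : ∀ i j, 0 ≤ V i j) (hUsum : ∀ j, ∑ i, U i j = 1) (hVsum : ∀ j, ∑ i, V i j = 1)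
    (h : M * Uᵀ = N * Vᵀ) (hrank : (M * Uᵀ).rank = Fintype.card r) :
    ∃ σ : Equiv.Perm r, V = U * σ.permMatrix ℝ := by
  have hUrank : U.rank = Fintype.card r :=
    (rank_transpose U).symm.trans (rank_eq_card_height_of_rank_mul hrank)
  obtain ⟨B, hB⟩ :=
    exists_eq_mul_of_mul_transpose_eq h (rank_eq_card_width_of_rank_mul (h ▸ hrank))
  obtain ⟨B', hB'⟩ :=
    exists_eq_mul_of_mul_transpose_eq h.symm (rank_eq_card_width_of_rank_mul hrank)
  obtain ⟨L, hL⟩ := exists_mul_eq_one_of_rank_eq_card hUrank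
  have hBB' : B * B' = 1 :=
    calc B * B' = L * U * (B * B') := by rw [hL, Matrix.one_mul]
      _ = L * U := by rw [Matrix.mul_assoc, ← Matrix.mul_assoc U, ← hB, ← hB']
      _ = 1 := hL
  have hBstoch : B ∈ colStochastic ℝ r := mem_colStochastic_iff_sum.mpr
    ⟨hU.nonneg_of_nonneg_mul (hB ▸ hV0), fun j => by
      rw [← sum_mul_apply_of_sum_eq_one hUsum, ← hB, hVsum]⟩
  obtain ⟨σ, hσ⟩ := exists_perm_eq_permMatrix_of_mem_colStochastic hBstoch
    (hV.nonneg_of_nonneg_mul (hB' ▸ hU0)) hBB'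
  exact ⟨σ, hσ ▸ hB⟩

end Separable

section Tucker

variable {d : ℕ}

theorem tucker_tucker {m p q : Fin d → ℕ} (A : ∀ k, Matrix (Fin (m k)) (Fin (p k)) ℝ)
    (B : ∀ k, Matrix (Fin (p k)) (Fin (q k)) ℝ) (G : (∀ k, Fin (q k)) → ℝ) :
    tucker A (tucker B G) = tucker (fun k => A k * B k) G := by
  funext j
  simp only [tucker, mul_apply, Fintype.prod_sum, Finset.mul_sum, Finset.sum_mul,
    Finset.prod_mul_distrib]
  rw [Finset.sum_comm]
  simp only [mul_assoc]

theorem tucker_one {q : Fin d → ℕ} (G : (∀ k, Fin (q k)) → ℝ) :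
    tucker (fun k => (1 : Matrix (Fin (q k)) (Fin (q k)) ℝ)) G = G := by
  funext j
  have hdelta : ∀ i, (∀ k, j k = i k) ↔ j = i := fun i => funext_iff.symm
  simp only [tucker, one_apply, Finset.prod_ite_zero, Finset.prod_const_one, true_implies, hdelta,
    ite_mul, one_mul, zero_mul, Finset.sum_ite_eq, Finset.mem_univ, if_true]

theorem tucker_injective_of_mul_eq_one {m r : Fin d → ℕ}
    {U : ∀ k, Matrix (Fin (m k)) (Fin (r k)) ℝ} {L : ∀ k, Matrix (Fin (r k)) (Fin (m k)) ℝ}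
    (hL : ∀ k, L k * U k = 1) : Function.Injective (tucker U) := fun G G' h => by
  simpa only [tucker_tucker, hL, tucker_one] using congrArg (tucker L) h

theorem unfoldMode_apply {m : Fin d → ℕ} (T : (∀ k, Fin (m k)) → ℝ) (k : Fin d)
    (rest : ∀ j : {j : Fin d // j ≠ k}, Fin (m j.1)) (c : Fin (m k)) :
    unfoldMode T k rest c = T ((Equiv.piSplitAt k (fun j => Fin (m j))).symm (c, rest)) := by
  simp only [unfoldMode]
  congr 1
  funext j
  split_ifs with h
  · subst h; simp [Equiv.piSplitAt]
  · simp [Equiv.piSplitAt, h]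

/-- The matrix `(⊗_{j≠k} U_j) G₍ₖ₎`. -/
noncomputable def tuckerExcept {n r : Fin d → ℕ} (U : ∀ k, Matrix (Fin (n k)) (Fin (r k)) ℝ)
    (G : (∀ k, Fin (r k)) → ℝ) (k : Fin d) :
    Matrix (∀ j : {j : Fin d // j ≠ k}, Fin (n j.1)) (Fin (r k)) ℝ :=
  fun rest a => ∑ i : ∀ j : {j : Fin d // j ≠ k}, Fin (r j.1),
    (∏ j, U j.1 (rest j) (i j)) * G ((Equiv.piSplitAt k (fun j => Fin (r j))).symm (a, i))

theorem unfoldMode_tucker {n r : Fin d → ℕ} (U : ∀ k, Matrix (Fin (n k)) (Fin (r k)) ℝ)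
    (G : (∀ k, Fin (r k)) → ℝ) (k : Fin d) :
    unfoldMode (tucker U G) k = tuckerExcept U G k * (U k)ᵀ := by
  ext rest c
  rw [unfoldMode_apply, tucker, ← (Equiv.piSplitAt k _).symm.sum_comp, Fintype.sum_prod_type,
    mul_apply]
  refine Finset.sum_congr rfl fun a _ => ?_
  simp only [tuckerExcept, transpose_apply, Finset.sum_mul]
  refine Finset.sum_congr rfl fun i _ => ?_
  have hrest : ∀ j : {j : Fin d // j ≠ k},
      U j ((Equiv.piSplitAt k (fun j => Fin (n j))).symm (c, rest) j)
        ((Equiv.piSplitAt k (fun j => Fin (r j))).symm (a, i) j) =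
        U j (rest j) (i j) := fun j => by simp [Equiv.piSplitAt, j.2]
  rw [Fintype.prod_eq_mul_prod_subtype_ne _ k, Fintype.prod_congr _ _ hrest]
  simp only [Equiv.piSplitAt_symm_apply, dif_pos]
  ring

end Tucker

/-- Identifiability of order-`d` NTD under separability (generalization of
Proposition 1 of Agterberg--Zhang): if all factors of both decompositions are
separable with entries in `[0,1]` and unit column sums, and every mode-`k`
unfolding of the tensor has rank `r k`, then the two decompositions coincide
up to permutations of the columns of each factor. -/
theorem separable_NTD_identifiable {d : ℕ} {n r : Fin d → ℕ}
    (U Ustar : ∀ k, Matrix (Fin (n k)) (Fin (r k)) ℝ)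
    (G Gstar : (∀ k, Fin (r k)) → ℝ)
    (hU01 : ∀ k i j, U k i j ∈ Set.Icc (0 : ℝ) 1)
    (hUstar01 : ∀ k i j, Ustar k i j ∈ Set.Icc (0 : ℝ) 1)
    (hUnorm : ∀ k j, ∑ i, U k i j = 1)
    (hUstarnorm : ∀ k j, ∑ i, Ustar k i j = 1)
    (hUsep : ∀ k, Separable (U k))
    (hUstarsep : ∀ k, Separable (Ustar k))
    (hrank : ∀ k, (unfoldMode (tucker U G) k).rank = r k)
    (heq : tucker U G = tucker Ustar Gstar) :
    ∃ σ : ∀ k, Equiv.Perm (Fin (r k)),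
      (∀ k, Ustar k = U k * (σ k).permMatrix ℝ) ∧
      Gstar = tucker (fun k => ((σ k).permMatrix ℝ)ᵀ) G := by
  have hunfold : ∀ k, tuckerExcept U G k * (U k)ᵀ = tuckerExcept Ustar Gstar k * (Ustar k)ᵀ :=
    fun k => by rw [← unfoldMode_tucker, ← unfoldMode_tucker, heq]
  have hrank' : ∀ k, (tuckerExcept U G k * (U k)ᵀ).rank = Fintype.card (Fin (r k)) :=
    fun k => by rw [← unfoldMode_tucker, hrank, Fintype.card_fin]
  choose σ hσ using fun k => (hUsep k).exists_perm_of_mul_transpose_eq (hUstarsep k)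
    (fun i j => (hU01 k i j).1) (fun i j => (hUstar01 k i j).1) (hUnorm k) (hUstarnorm k)
    (hunfold k) (hrank' k)
  choose L hL using fun k => exists_mul_eq_one_of_rank_eq_card
    ((rank_transpose (U k)).symm.trans (rank_eq_card_height_of_rank_mul (hrank' k)))
  have hG : G = tucker (fun k => (σ k).permMatrix ℝ) Gstar :=
    tucker_injective_of_mul_eq_one hL (by rw [heq, tucker_tucker, ← funext hσ])
  refine ⟨σ, hσ, ?_⟩
  rw [hG, tucker_tucker]
  simp only [permMatrix_transpose_mul, tucker_one]
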